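/- arXiv:1412.2229 — 2 statements merged into one kernel-verified Lean document; each statement's English description precedes it below -/
import Mathlib

section
/- Let θ̃(x,y,z) = arg(1 - x² - y² + 2iy), defined on ℝ³ ∖ K̃ where K̃ = {x = ±1, y = 0}, and let ρ̃(x,y,z) = (z,-y,-x). Then for every point (x,y,z) on the ellipsoid E = {x² + 2y² + z² = 2} with (x,y,z) ∉ K̃, one has θ̃(ρ̃(x,y,z)) = θ̃(x,y,z) + π (as elements of ℝ/2πℤ). -/
/-- On the ellipsoid `E = {x² + 2y² + z² = 2}` minus `K̃ = {x = ±1, y = 0}`, one has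
`θ̃(ρ̃(x,y,z)) = θ̃(x,y,z) + π` in `ℝ/2πℤ`, where `θ̃(x,y,z) = arg(1 - x² - y² + 2iy)`
and `ρ̃(x,y,z) = (z,-y,-x)`. -/
theorem rho_shifts_arg_by_pi (x y z : ℝ)
    (hE : x ^ 2 + 2 * y ^ 2 + z ^ 2 = 2)
    (hK : ¬((x = 1 ∨ x = -1) ∧ y = 0)) :
    ((Complex.arg (((1 - z ^ 2 - (-y) ^ 2 : ℝ) : ℂ) + ((2 * (-y) : ℝ) : ℂ) * Complex.I) :
        Real.Angle)) =
      ((Complex.arg (((1 - x ^ 2 - y ^ 2 : ℝ) : ℂ) + ((2 * y : ℝ) : ℂ) * Complex.I) :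
        Real.Angle)) + ((Real.pi : ℝ) : Real.Angle) := by
  set w : ℂ := ((1 - x ^ 2 - y ^ 2 : ℝ) : ℂ) + ((2 * y : ℝ) : ℂ) * Complex.I with hw
  have hne : w ≠ 0 := by
    intro h
    have hre := congrArg Complex.re h
    have him := congrArg Complex.im h
    simp [hw, ← Complex.ofReal_pow] at hre him
    apply hK
    refine ⟨?_, him⟩
    have hx2 : x * x = 1 := by nlinarith
    exact mul_self_eq_one_iff.mp hx2
  have heq : ((1 - z ^ 2 - (-y) ^ 2 : ℝ) : ℂ) + ((2 * (-y) : ℝ) : ℂ) * Complex.I = -w := by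
    rw [hw]
    have : (1 - z ^ 2 - (-y) ^ 2 : ℝ) = -(1 - x ^ 2 - y ^ 2) := by nlinarith
    rw [this]
    push_cast
    ring
  rw [heq]
  exact Complex.arg_neg_coe_angle hne
end

section
/- For each t ∈ (-π, π) with t ≠ 0, the level set {(x,y) ∈ ℝ² ∖ {(±1,0)} : arg(1 - x² - y² + 2iy) = t}, together with the two points (±1,0), is a connected subset of ℝ²; for t = π, the set {(x,y) : y = 0, x² > 1} ∪ {(±1,0)} has exactly two connected components. -/
/-!
Writing `z = x + iy`, one has `1 - x² - y² + 2iy = (1 + z)(1 - z̄)`, whose argument is that of the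
Cayley transform `(1 + z)/(1 - z)`. Hence for `t ∈ (-π, π)`, `t ≠ 0`, the `t`-page is the image of
the open ray `ℝ_{>0} e^{it}` under the inverse transform `w ↦ (w - 1)/(w + 1)`; reparametrising the
ray by `s/(1 - s)`, `s ∈ (0, 1)`, the page together with `±1` is the image of `[0, 1]` under a
continuous path, hence connected. The `π`-page is the union of the two rays `x ≥ 1`, `x ≤ -1` of
the real axis, which are separated by the half-planes `x > 0` and `x < 0`.
-/

/-- `θ̃(x,y) = arg(1 - x² - y² + 2iy)` with `arg` valued in `(-π, π]`. -/
noncomputable def pageArg (x y : ℝ) : ℝ :=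
  Complex.arg (((1 - x ^ 2 - y ^ 2 : ℝ) : ℂ) + ((2 * y : ℝ) : ℂ) * Complex.I)

open Set Complex ComplexConjugate
open scoped Real

lemma pageArg_re_im (z : ℂ) : pageArg z.re z.im = arg ((1 + z) * conj (1 - z)) := by
  unfold pageArg
  congr 1
  apply Complex.ext <;> simp [pow_two] <;> ring

lemma arg_mul_conj (a : ℂ) {b : ℂ} (hb : b ≠ 0) : arg (a * conj b) = arg (a / b) := by
  rw [← arg_mul_real (normSq_pos.mpr hb) (a / b), ← mul_conj, ← mul_assoc, div_mul_cancel₀ a hb]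

/-- The inverse Cayley transform `w ↦ (w - 1)/(w + 1)` of the point `s/(1 - s) · e^{it}` of the
ray, with numerator and denominator multiplied by `1 - s`. -/
noncomputable def pagePath (t s : ℝ) : ℂ :=
  (s * exp (t * I) + (s - 1)) / (s * exp (t * I) + (1 - s))

lemma pagePath_denom_ne_zero {t : ℝ} (ht : Real.sin t ≠ 0) (s : ℝ) :
    (s : ℂ) * exp (t * I) + (1 - s) ≠ 0 := by
  intro h
  have him : s * Real.sin t = 0 := by simpa [exp_ofReal_mul_I_im] using congrArg im h
  obtain rfl : s = 0 := (mul_eq_zero.mp him).resolve_right ht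
  simp at h

lemma continuous_pagePath {t : ℝ} (ht : Real.sin t ≠ 0) : Continuous (pagePath t) := by
  unfold pagePath
  exact Continuous.div (by fun_prop) (by fun_prop) (pagePath_denom_ne_zero ht)

lemma pagePath_zero (t : ℝ) : pagePath t 0 = -1 := by
  simp [pagePath]

lemma pagePath_one (t : ℝ) : pagePath t 1 = 1 := by
  simp [pagePath, Complex.exp_ne_zero]

-- At `s = 1` both sides vanish, by the convention `x / 0 = 0`.
lemma cayley_pagePath {t : ℝ} (ht : Real.sin t ≠ 0) (s : ℝ) :
    (1 + pagePath t s) / (1 - pagePath t s) = (s / (1 - s) : ℝ) * exp (t * I) := by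
  have hd := pagePath_denom_ne_zero ht s
  unfold pagePath
  rw [one_add_div hd, one_sub_div hd, div_div_div_cancel_right₀ hd]
  calc _ = (2 * s * exp (t * I)) / (2 * (1 - s)) := by congr 1 <;> ring
    _ = _ := by push_cast; field_simp

lemma arg_exp_mul_I_of_mem {t : ℝ} (ht : t ∈ Ioc (-π) π) : arg (exp (t * I)) = t := by
  rw [exp_mul_I, arg_cos_add_sin_mul_I ht]

lemma exists_pagePath_eq {t : ℝ} {z : ℂ} (hz₁ : z ≠ 1) (hz₂ : z ≠ -1)
    (ht : arg ((1 + z) / (1 - z)) = t) : ∃ s ∈ Ioo (0 : ℝ) 1, pagePath t s = z := by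
  have h1 : 1 - z ≠ 0 := sub_ne_zero.mpr hz₁.symm
  have h2 : 1 + z ≠ 0 := by rwa [add_comm, ← sub_neg_eq_add, sub_ne_zero]
  set r := ‖(1 + z) / (1 - z)‖
  have hr : 0 < r := norm_pos_iff.mpr (div_ne_zero h2 h1)
  have hpolar : (r : ℂ) * exp (t * I) = (1 + z) / (1 - z) := by
    rw [← ht]; exact norm_mul_exp_arg_mul_I _
  refine ⟨r / (1 + r), ⟨by positivity, (div_lt_one (by positivity)).mpr (by linarith)⟩, ?_⟩
  have hr1 : (1 + r : ℂ) ≠ 0 := by exact_mod_cast (by positivity : (1 + r) ≠ 0)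
  have hq1 : (r : ℂ) * exp (t * I) + 1 ≠ 0 := by
    rw [hpolar, div_add_one h1]
    exact div_ne_zero (by ring_nf; norm_num) h1
  calc pagePath t (r / (1 + r)) = (r * exp (t * I) - 1) / (r * exp (t * I) + 1) := by
        unfold pagePath
        rw [div_eq_div_iff _ hq1]
        · push_cast
          field_simp
          ring
        · push_cast
          field_simp
          exact div_ne_zero (by rwa [add_sub_cancel_right]) hr1
    _ = z := by rw [hpolar]; field_simp; ring

lemma pagePath_ne_one {t s : ℝ} (ht : Real.sin t ≠ 0) (hs : s ≠ 1) : pagePath t s ≠ 1 := by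
  rw [pagePath, Ne, div_eq_one_iff_eq (pagePath_denom_ne_zero ht s), add_right_inj]
  intro h
  exact hs (by linarith [show s - 1 = 1 - s by exact_mod_cast h])

lemma pageArg_pagePath {t s : ℝ} (ht : t ∈ Ioc (-π) π) (hsin : Real.sin t ≠ 0)
    (hs : s ∈ Ioo (0 : ℝ) 1) : pageArg (pagePath t s).re (pagePath t s).im = t := by
  rw [pageArg_re_im, arg_mul_conj _ (sub_ne_zero.mpr (pagePath_ne_one hsin hs.2.ne).symm),
    cayley_pagePath hsin s, arg_real_mul _ (div_pos hs.1 (sub_pos.mpr hs.2)),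
    arg_exp_mul_I_of_mem ht]

lemma mk_re_im_mem_pm_one_iff (z : ℂ) :
    (z.re, z.im) ∈ ({(1, 0), (-1, 0)} : Set (ℝ × ℝ)) ↔ z = 1 ∨ z = -1 := by
  simp [Complex.ext_iff]

lemma page_union_eq_image {t : ℝ} (ht : t ∈ Ioc (-π) π) (hsin : Real.sin t ≠ 0) :
    {p : ℝ × ℝ | pageArg p.1 p.2 = t} ∪ {(1, 0), (-1, 0)} =
      (equivRealProd ∘ pagePath t) '' Icc 0 1 := by
  ext p
  obtain ⟨z, rfl⟩ := equivRealProd.surjective p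
  simp only [mem_union, mem_ofPred_eq, Function.comp_apply, equivRealProd_apply, Prod.mk.injEq,
    ← Complex.ext_iff, mk_re_im_mem_pm_one_iff, mem_image]
  constructor
  · intro h
    by_cases hE : z = 1 ∨ z = -1
    · rcases hE with rfl | rfl
      · exact ⟨1, right_mem_Icc.mpr zero_le_one, by rw [pagePath_one]⟩
      · exact ⟨0, left_mem_Icc.mpr zero_le_one, by rw [pagePath_zero]⟩
    · obtain ⟨hz₁, hz₂⟩ := not_or.mp hE
      have hz := h.resolve_right hE
      rw [pageArg_re_im, arg_mul_conj _ (sub_ne_zero.mpr (Ne.symm hz₁))] at hz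
      obtain ⟨s, hs, rfl⟩ := exists_pagePath_eq hz₁ hz₂ hz
      exact ⟨s, Ioo_subset_Icc_self hs, rfl⟩
  · rintro ⟨s, ⟨hs0, hs1⟩, rfl⟩
    rcases hs0.eq_or_lt with rfl | hs0
    · exact .inr (.inr (pagePath_zero t))
    rcases hs1.eq_or_lt with rfl | hs1
    · exact .inr (.inl (pagePath_one t))
    exact .inl (pageArg_pagePath ht hsin ⟨hs0, hs1⟩)

theorem connectedComponentIn_union_eq_left {X : Type*} [TopologicalSpace X] {A B U V : Set X}
    (hU : IsOpen U) (hV : IsOpen V) (hUV : Disjoint U V) (hA : IsPreconnected A) (hAU : A ⊆ U)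
    (hBV : B ⊆ V) {a : X} (ha : a ∈ A) : connectedComponentIn (A ∪ B) a = A := by
  refine subset_antisymm ?_ (hA.subset_connectedComponentIn ha subset_union_left)
  have hsub : connectedComponentIn (A ∪ B) a ⊆ A ∪ B := connectedComponentIn_subset _ _
  have hCU : connectedComponentIn (A ∪ B) a ⊆ U :=
    isPreconnected_connectedComponentIn.subset_left_of_subset_union hU hV hUV
      (hsub.trans (union_subset_union hAU hBV))
      ⟨a, mem_connectedComponentIn (subset_union_left ha), hAU ha⟩
  intro c hc
  exact (hsub hc).resolve_right fun hcB => hUV.ne_of_mem (hCU hc) (hBV hcB) rfl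

lemma pi_page_eq_rays :
    {p : ℝ × ℝ | p.2 = 0 ∧ 1 < p.1 ^ 2} ∪ {(1, 0), (-1, 0)} =
      Ici 1 ×ˢ {0} ∪ Iic (-1) ×ˢ {0} := by
  ext ⟨x, y⟩
  simp only [mem_union, mem_ofPred_eq, mem_insert_iff, mem_singleton_iff, Prod.mk.injEq, mem_prod,
    mem_Ici, mem_Iic]
  constructor
  · rintro (⟨rfl, hx⟩ | ⟨rfl, rfl⟩ | ⟨rfl, rfl⟩)
    · rcases le_or_gt 0 x with h | h
      · exact .inl ⟨by nlinarith, rfl⟩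
      · exact .inr ⟨by nlinarith, rfl⟩
    · exact .inl ⟨le_rfl, rfl⟩
    · exact .inr ⟨le_rfl, rfl⟩
  · rintro (⟨hx, rfl⟩ | ⟨hx, rfl⟩)
    · rcases hx.eq_or_lt with rfl | hx
      · exact .inr (.inl ⟨rfl, rfl⟩)
      · exact .inl ⟨rfl, by nlinarith⟩
    · rcases hx.eq_or_lt with rfl | hx
      · exact .inr (.inr ⟨rfl, rfl⟩)
      · exact .inl ⟨rfl, by nlinarith⟩

lemma isConnected_page_union {t : ℝ} (ht : t ∈ Ioo (-π) π) (ht0 : t ≠ 0) :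
    IsConnected ({p : ℝ × ℝ | pageArg p.1 p.2 = t} ∪ {(1, 0), (-1, 0)}) := by
  have hsin : Real.sin t ≠ 0 := by rwa [Ne, Real.sin_eq_zero_iff_of_lt_of_lt ht.1 ht.2]
  rw [page_union_eq_image (Ioo_subset_Ioc_self ht) hsin]
  exact (isConnected_Icc zero_le_one).image _
    ((continuous_re.prodMk continuous_im).comp (continuous_pagePath hsin)).continuousOn

lemma connectedComponentIn_rays_of_mem_right {c : ℝ × ℝ} (hc : c ∈ Ici (1 : ℝ) ×ˢ {(0 : ℝ)}) :
    connectedComponentIn (Ici 1 ×ˢ {0} ∪ Iic (-1) ×ˢ {0}) c = Ici (1 : ℝ) ×ˢ {(0 : ℝ)} :=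
  connectedComponentIn_union_eq_left (isOpen_Ioi.preimage continuous_fst)
    (isOpen_Iio.preimage continuous_fst) (Ioi_disjoint_Iio_same.preimage Prod.fst)
    (isPreconnected_Ici.prod isPreconnected_singleton)
    (fun _ hp => lt_of_lt_of_le one_pos hp.1) (fun _ hp => lt_of_le_of_lt hp.1 neg_one_lt_zero) hc

lemma connectedComponentIn_rays_of_mem_left {c : ℝ × ℝ} (hc : c ∈ Iic (-1 : ℝ) ×ˢ {(0 : ℝ)}) :
    connectedComponentIn (Ici 1 ×ˢ {0} ∪ Iic (-1) ×ˢ {0}) c = Iic (-1 : ℝ) ×ˢ {(0 : ℝ)} := by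
  rw [union_comm]
  exact connectedComponentIn_union_eq_left (isOpen_Iio.preimage continuous_fst)
    (isOpen_Ioi.preimage continuous_fst) (Ioi_disjoint_Iio_same.preimage Prod.fst).symm
    (isPreconnected_Iic.prod isPreconnected_singleton)
    (fun _ hp => lt_of_le_of_lt hp.1 neg_one_lt_zero) (fun _ hp => lt_of_lt_of_le one_pos hp.1) hc

/-- For `t ∈ (-π,π)`, `t ≠ 0`, the `t`-level of `θ̃` together with `(±1,0)` is
connected; the `π`-level `{y = 0, x² > 1}` together with `(±1,0)` has exactly two
connected components. -/
theorem pages_connectedness :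
    (∀ t ∈ Set.Ioo (-Real.pi) Real.pi, t ≠ 0 →
      IsConnected
        ({p : ℝ × ℝ | p ∉ ({(1, 0), (-1, 0)} : Set (ℝ × ℝ)) ∧ pageArg p.1 p.2 = t} ∪
          {(1, 0), (-1, 0)})) ∧
    (∃ a ∈ ({p : ℝ × ℝ | p.2 = 0 ∧ 1 < p.1 ^ 2} ∪ {(1, 0), (-1, 0)}),
      ∃ b ∈ ({p : ℝ × ℝ | p.2 = 0 ∧ 1 < p.1 ^ 2} ∪ {(1, 0), (-1, 0)}),
        connectedComponentIn
            ({p : ℝ × ℝ | p.2 = 0 ∧ 1 < p.1 ^ 2} ∪ {(1, 0), (-1, 0)}) a ≠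
          connectedComponentIn
            ({p : ℝ × ℝ | p.2 = 0 ∧ 1 < p.1 ^ 2} ∪ {(1, 0), (-1, 0)}) b ∧
        ∀ c ∈ ({p : ℝ × ℝ | p.2 = 0 ∧ 1 < p.1 ^ 2} ∪ {(1, 0), (-1, 0)}),
          connectedComponentIn
              ({p : ℝ × ℝ | p.2 = 0 ∧ 1 < p.1 ^ 2} ∪ {(1, 0), (-1, 0)}) c =
            connectedComponentIn
              ({p : ℝ × ℝ | p.2 = 0 ∧ 1 < p.1 ^ 2} ∪ {(1, 0), (-1, 0)}) a ∨
          connectedComponentIn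
              ({p : ℝ × ℝ | p.2 = 0 ∧ 1 < p.1 ^ 2} ∪ {(1, 0), (-1, 0)}) c =
            connectedComponentIn
              ({p : ℝ × ℝ | p.2 = 0 ∧ 1 < p.1 ^ 2} ∪ {(1, 0), (-1, 0)}) b) := by
  refine ⟨fun t ht ht0 => ?_, ?_⟩
  · have hlevel : {p : ℝ × ℝ | p ∉ ({(1, 0), (-1, 0)} : Set (ℝ × ℝ)) ∧ pageArg p.1 p.2 = t} =
        {p | pageArg p.1 p.2 = t} \ {(1, 0), (-1, 0)} := by
      ext; exact and_comm
    rw [hlevel, sdiff_union_self]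
    exact isConnected_page_union ht ht0
  · have hright : ((1 : ℝ), (0 : ℝ)) ∈ Ici (1 : ℝ) ×ˢ {(0 : ℝ)} :=
      mk_mem_prod self_mem_Ici rfl
    have hleft : ((-1 : ℝ), (0 : ℝ)) ∈ Iic (-1 : ℝ) ×ˢ {(0 : ℝ)} :=
      mk_mem_prod self_mem_Iic rfl
    simp only [pi_page_eq_rays]
    refine ⟨(1, 0), .inl hright, (-1, 0), .inr hleft, ?_, ?_⟩
    · rw [connectedComponentIn_rays_of_mem_right hright, connectedComponentIn_rays_of_mem_left hleft]
      exact fun h => absurd (h ▸ hright).1 (by norm_num)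
    · rintro c (hc | hc)
      · exact .inl (by rw [connectedComponentIn_rays_of_mem_right hc,
          connectedComponentIn_rays_of_mem_right hright])
      · exact .inr (by rw [connectedComponentIn_rays_of_mem_left hc,
          connectedComponentIn_rays_of_mem_left hleft])
end
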